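/- Let D be a DAG on a finite vertex set V with distinct nonadjacent nodes v and w (neither v → w nor w → v is an edge of D), and let D' be the directed graph obtained from D by adding the edge v → w. Then D' is a DAG that is unconditionally equivalent to D if and only if the ordered pair (v, w) is partially weakly covered in D or implied by transitivity in D. -/

import Mathlib

/-!
In a DAG a trek between `x` and `y` exists exactly when `x` and `y` have a common ancestor: a
trek has no collider, so it climbs to a top vertex and then only descends; conversely a trek can be
grown from a common ancestor one edge at a time, cutting it short whenever it meets itself.
Adding `v → w` keeps the graph acyclic iff `w` is not an ancestor of `v`, and the only new ancestry
relations it creates run from ancestors of `v` to descendants of `w`. As every node lies below a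
source, unconditional equivalence survives exactly when every source above `v` is already above
`w`, i.e. `ma({v}) ⊆ ma({w})`. This is automatic when `v` is an ancestor of `w`; otherwise it
forces `v` to have a parent, since a parentless `v` would be a source above `v` but not above `w`.
-/
namespace UEC

variable {V : Type*}

/-- A directed graph is a DAG if it has no directed cycles. -/
def IsDAG (D : Digraph V) : Prop := ∀ v : V, ¬ Relation.TransGen D.Adj v v

/-- `an D v` : the set of ancestors of `v` (nodes with a directed path to `v`),
including `v` itself. -/
def an (D : Digraph V) (v : V) : Set V := {u | Relation.ReflTransGen D.Adj u v}

/-- `de D v` : the set of descendants of `v` (nodes reachable by a directed path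
from `v`), including `v` itself. -/
def de (D : Digraph V) (v : V) : Set V := {u | Relation.ReflTransGen D.Adj v u}

/-- `pa D v` : the set of parents of `v`. -/
def pa (D : Digraph V) (v : V) : Set V := {u | D.Adj u v}

/-- A source node is a node with no parents. -/
def IsSource (D : Digraph V) (v : V) : Prop := pa D v = ∅

/-- `sources D` : the set of source nodes of `D` (denoted `ma_D(V)` in the paper). -/
def sources (D : Digraph V) : Set V := {v | IsSource D v}

/-- Ancestors of a set of nodes. -/
def anSet (D : Digraph V) (A : Set V) : Set V := ⋃ a ∈ A, an D a

/-- `maSet D A = {u ∈ an_D(A) : an_D(u) = {u}}`, the source nodes that are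
ancestors of `A`. -/
def maSet (D : Digraph V) (A : Set V) : Set V :=
  {u | u ∈ anSet D A ∧ an D u = {u}}

/-- Two nodes are adjacent in a digraph if there is an edge between them in
either direction. -/
def Adjacent (D : Digraph V) (v w : V) : Prop := D.Adj v w ∨ D.Adj w v

/-- A trek in `D` is a path over distinct vertices (given as the list of its
vertices, consecutive ones being adjacent) containing no collider
`p i → p (i+1) ← p (i+2)` as a subpath. -/
def IsTrekList (D : Digraph V) (p : List V) : Prop :=
  p.Nodup ∧
    (∀ i : ℕ, (h : i + 1 < p.length) →
      (D.Adj (p.get ⟨i, by omega⟩) (p.get ⟨i + 1, h⟩) ∨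
        D.Adj (p.get ⟨i + 1, h⟩) (p.get ⟨i, by omega⟩))) ∧
    (∀ i : ℕ, (h : i + 2 < p.length) →
      ¬(D.Adj (p.get ⟨i, by omega⟩) (p.get ⟨i + 1, by omega⟩) ∧
        D.Adj (p.get ⟨i + 2, h⟩) (p.get ⟨i + 1, by omega⟩)))

/-- There is a trek between `v` and `w` in `D`. -/
def HasTrek (D : Digraph V) (v w : V) : Prop :=
  ∃ p : List V, IsTrekList D p ∧ p.head? = some v ∧ p.getLast? = some w

/-- Adjacency in the unconditional dependence graph `U^D` : two distinct nodes
are adjacent iff there is a trek between them. -/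
def UAdj (D : Digraph V) (v w : V) : Prop :=
  v ≠ w ∧ (HasTrek D v w ∨ HasTrek D w v)

/-- Two digraphs on the same vertex set are unconditionally equivalent if for
all distinct nodes there is a trek between them in one iff there is one in the
other. -/
def UncondEquiv (D D' : Digraph V) : Prop :=
  ∀ v w : V, v ≠ w → (HasTrek D v w ↔ HasTrek D' v w)

/-- The digraph obtained by adding the edge `v → w`. -/
def addEdge (D : Digraph V) (v w : V) : Digraph V :=
  ⟨fun a b => D.Adj a b ∨ (a = v ∧ b = w)⟩

/-- The digraph obtained by deleting the edge `v → w`. -/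
def delEdge (D : Digraph V) (v w : V) : Digraph V :=
  ⟨fun a b => D.Adj a b ∧ ¬(a = v ∧ b = w)⟩

/-- The digraph obtained by replacing the edge `v → w` with `w → v`. -/
def revEdge (D : Digraph V) (v w : V) : Digraph V :=
  ⟨fun a b => (D.Adj a b ∧ ¬(a = v ∧ b = w)) ∨ (a = w ∧ b = v)⟩

/-- The ordered pair `(v, w)` is partially weakly covered in `D`. -/
def PartiallyWeaklyCovered (D : Digraph V) (v w : V) : Prop :=
  maSet D {v} ⊆ maSet D {w} ∧ v ∉ an D w ∧ w ∉ an D v ∧ pa D v ≠ ∅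

/-- The ordered pair `(v, w)` is implied by transitivity in `D`, i.e.
`v ∈ an_D(w) \ ({w} ∪ pa_D(w))`. -/
def ImpliedByTransitivity (D : Digraph V) (v w : V) : Prop :=
  v ∈ an D w \ ({w} ∪ pa D w)

/-- The edge `v → w` is weakly covered in `D`. -/
def WeaklyCovered (D : Digraph V) (v w : V) : Prop :=
  maSet D (pa D v) = maSet D (pa D w \ {v}) ∧ v ∉ anSet D (pa D w \ {v})

variable {D : Digraph V}

theorem isTrekList_nil : IsTrekList D [] :=
  ⟨List.nodup_nil, fun _ h => by simp at h, fun _ h => by simp at h⟩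

theorem isTrekList_singleton (a : V) : IsTrekList D [a] :=
  ⟨List.nodup_singleton a, fun _ h => by simp at h, fun _ h => by simp at h⟩

theorem isTrekList_cons_cons {a b : V} {t : List V} :
    IsTrekList D (a :: b :: t) ↔
      a ∉ b :: t ∧ (D.Adj a b ∨ D.Adj b a) ∧ (∀ c ∈ t.head?, ¬(D.Adj a b ∧ D.Adj c b)) ∧
        IsTrekList D (b :: t) := by
  simp only [IsTrekList, List.nodup_cons (a := a), List.get_eq_getElem]
  constructor
  · rintro ⟨⟨ha, hnd⟩, hadj, hcol⟩
    refine ⟨ha, hadj 0 (by simp), ?_, hnd, fun i h => hadj (i + 1) (by simpa using h),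
      fun i h => hcol (i + 1) (by simpa using h)⟩
    intro c hc
    obtain ⟨t', rfl⟩ := List.head?_eq_some_iff.1 hc
    exact hcol 0 (by simp)
  · rintro ⟨ha, hab, hcol₀, hnd, hadj, hcol⟩
    refine ⟨⟨ha, hnd⟩, ?_, ?_⟩
    · rintro (_ | i) h
      · exact hab
      · exact hadj i (by simpa using h)
    · rintro (_ | i) h
      · cases t with
        | nil => simp at h
        | cons c t => exact hcol₀ c rfl
      · exact hcol i (by simpa using h)

theorem IsTrekList.of_cons {a : V} {t : List V} (h : IsTrekList D (a :: t)) : IsTrekList D t := by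
  cases t with
  | nil => exact isTrekList_nil
  | cons b t => exact (isTrekList_cons_cons.1 h).2.2.2

theorem IsTrekList.of_append_right {l₁ l₂ : List V} (h : IsTrekList D (l₁ ++ l₂)) :
    IsTrekList D l₂ := by
  induction l₁ with
  | nil => exact h
  | cons a l₁ ih => exact ih h.of_cons

/-- Once a trek leaves `x` along an out-edge, the absence of colliders keeps it descending, so `x`
itself is then the common ancestor. -/
theorem IsTrekList.exists_mem_an_of_cons {x y : V} {t : List V} (h : IsTrekList D (x :: t))
    (hy : (x :: t).getLast? = some y) :
    (∃ u, u ∈ an D x ∧ u ∈ an D y) ∧ ∀ b ∈ t.head?, D.Adj x b → x ∈ an D y := by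
  induction t generalizing x with
  | nil =>
    obtain rfl : x = y := by simpa using hy
    exact ⟨⟨x, .refl, .refl⟩, by simp⟩
  | cons b t ih =>
    obtain ⟨-, hxb, hcol, hb⟩ := isTrekList_cons_cons.1 h
    obtain ⟨⟨u, hub, huy⟩, hbout⟩ := ih hb (by simpa using hy)
    have hforward : D.Adj x b → x ∈ an D y := by
      intro hxb'
      refine Relation.ReflTransGen.head hxb' ?_
      cases t with
      | nil =>
        obtain rfl : b = y := by simpa using hy
        exact .refl
      | cons c t =>
        refine hbout c rfl ?_
        obtain hbc | hcb := (isTrekList_cons_cons.1 hb).2.1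
        · exact hbc
        · exact absurd ⟨hxb', hcb⟩ (hcol c rfl)
    refine ⟨?_, fun b' hb' => by cases hb'; exact hforward⟩
    rcases hxb with hxb | hbx
    · exact ⟨x, .refl, hforward hxb⟩
    · exact ⟨u, hub.tail hbx, huy⟩

theorem HasTrek.exists_mem_an {x y : V} (h : HasTrek D x y) : ∃ u, u ∈ an D x ∧ u ∈ an D y := by
  obtain ⟨p, hp, hx, hy⟩ := h
  obtain ⟨t, rfl⟩ := List.head?_eq_some_iff.1 hx
  exact (hp.exists_mem_an_of_cons hy).1

theorem IsDAG.asymm (hD : IsDAG D) {a b : V} (h : D.Adj a b) : ¬ D.Adj b a :=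
  fun h' => hD a (.head h (.single h'))

theorem IsDAG.eq_of_mem_an_of_mem_an (hD : IsDAG D) {a b : V} (hab : a ∈ an D b)
    (hba : b ∈ an D a) : a = b := by
  rcases Relation.ReflTransGen.cases_head hab with h | ⟨c, hac, hcb⟩
  · exact h
  · exact absurd (Relation.TransGen.head' hac (hcb.trans hba)) (hD a)

theorem IsDAG.isTrekList_of_isChain (hD : IsDAG D) {l : List V} (h : l.IsChain D.Adj) :
    IsTrekList D l := by
  induction l with
  | nil => exact isTrekList_nil
  | cons a t ih =>
    cases t with
    | nil => exact isTrekList_singleton a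
    | cons b t =>
      obtain ⟨hab, hbt⟩ := List.isChain_cons_cons.1 h
      refine isTrekList_cons_cons.2 ⟨fun ha => ?_, .inl hab, fun c hc hcol => ?_, ih hbt⟩
      · have hba : b ∈ an D a :=
          hbt.induction (b ∈ an D ·) _ (fun _ _ h₁ h₂ => h₂.tail h₁)
            (fun _ => .refl) a ha
        exact hD a (Relation.TransGen.head' hab hba)
      · obtain ⟨t', rfl⟩ := List.head?_eq_some_iff.1 hc
        exact hD.asymm (List.isChain_cons_cons.1 hbt).1 hcol.2

theorem IsDAG.hasTrek_of_mem_an (hD : IsDAG D) {u y : V} (h : u ∈ an D y) : HasTrek D u y := by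
  obtain ⟨t, hchain, hlast⟩ := List.exists_isChain_cons_of_relationReflTransGen h
  exact ⟨u :: t, hD.isTrekList_of_isChain hchain, rfl, by
    rw [List.getLast?_eq_some_getLast (List.cons_ne_nil u t), hlast]⟩

theorem IsDAG.hasTrek_of_adj (hD : IsDAG D) {x y a : V} (h : HasTrek D x y) (hxa : D.Adj x a) :
    HasTrek D a y := by
  obtain ⟨p, hp, hx, hy⟩ := h
  obtain ⟨t, rfl⟩ := List.head?_eq_some_iff.1 hx
  by_cases ha : a ∈ x :: t
  · obtain ⟨l₁, l₂, hsplit⟩ := List.append_of_mem ha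
    rw [hsplit] at hp hy
    exact ⟨a :: l₂, hp.of_append_right, rfl, by rwa [List.getLast?_append_cons] at hy⟩
  · refine ⟨a :: x :: t, isTrekList_cons_cons.2 ⟨ha, .inr hxa, ?_, hp⟩, rfl, ?_⟩
    · exact fun _ _ hcol => hD.asymm hxa hcol.1
    · rw [List.getLast?_cons_cons]; exact hy

theorem IsDAG.hasTrek_iff (hD : IsDAG D) {x y : V} :
    HasTrek D x y ↔ ∃ u, u ∈ an D x ∧ u ∈ an D y := by
  refine ⟨HasTrek.exists_mem_an, ?_⟩
  rintro ⟨u, hux, huy⟩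
  induction hux with
  | refl => exact hD.hasTrek_of_mem_an huy
  | tail _ hbc ih => exact hD.hasTrek_of_adj ih hbc

theorem an_eq_singleton_of_pa_eq_empty {s : V} (h : pa D s = ∅) : an D s = {s} := by
  ext u
  refine ⟨fun hu => ?_, fun hu => hu ▸ .refl⟩
  rcases Relation.ReflTransGen.cases_tail hu with rfl | ⟨c, -, hcs⟩
  · rfl
  · exact absurd (show c ∈ pa D s from hcs) (h ▸ Set.notMem_empty c)

theorem IsDAG.exists_mem_an_an_eq_singleton [Finite V] (hD : IsDAG D) (x : V) :
    ∃ s ∈ an D x, an D s = {s} := by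
  have : IsTrans V (Relation.TransGen D.Adj) := ⟨fun _ _ _ => .trans⟩
  have : Std.Irrefl (Relation.TransGen D.Adj) := ⟨hD⟩
  have hwf : WellFounded D.Adj :=
    Subrelation.wf .single (Finite.wellFounded_of_trans_of_irrefl (Relation.TransGen D.Adj))
  obtain ⟨s, hsx, hmin⟩ := hwf.has_min (an D x) ⟨x, .refl⟩
  refine ⟨s, hsx, an_eq_singleton_of_pa_eq_empty ?_⟩
  exact Set.eq_empty_of_forall_notMem fun p hp => hmin p (Relation.ReflTransGen.head hp hsx) hp

theorem mem_maSet_singleton {s x : V} : s ∈ maSet D {x} ↔ s ∈ an D x ∧ an D s = {s} := by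
  simp [maSet, anSet]

theorem maSet_singleton_subset_of_mem_an {v w : V} (h : v ∈ an D w) :
    maSet D {v} ⊆ maSet D {w} := fun s hs => by
  rw [mem_maSet_singleton] at hs ⊢
  exact ⟨hs.1.trans h, hs.2⟩

theorem mem_an_addEdge {v w u a : V} :
    u ∈ an (addEdge D v w) a ↔ u ∈ an D a ∨ u ∈ an D v ∧ w ∈ an D a := by
  constructor
  · intro h
    induction h with
    | refl => exact .inl .refl
    | tail _ hbc ih =>
      rcases hbc with hbc | ⟨rfl, rfl⟩
      · exact ih.imp (·.tail hbc) (And.imp_right (·.tail hbc))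
      · exact .inr ⟨ih.elim id (·.1), .refl⟩
  · have hmono : ∀ {a b}, a ∈ an D b → a ∈ an (addEdge D v w) b :=
      fun h => Relation.ReflTransGen.mono (fun _ _ => Or.inl) _ _ h
    rintro (h | ⟨huv, hwa⟩)
    · exact hmono h
    · exact ((hmono huv).tail (Or.inr ⟨rfl, rfl⟩)).trans (hmono hwa)

theorem isDAG_addEdge_iff (hD : IsDAG D) {v w : V} : IsDAG (addEdge D v w) ↔ w ∉ an D v := by
  constructor
  · intro hD' hwv
    exact hD' v (Relation.TransGen.head' (Or.inr ⟨rfl, rfl⟩) (mem_an_addEdge.2 (.inl hwv)))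
  · intro hwv a hcyc
    obtain ⟨b, hab, hba⟩ := Relation.TransGen.head'_iff.1 hcyc
    rcases hab with hab | ⟨rfl, rfl⟩
    · rcases mem_an_addEdge.1 hba with hba | ⟨hbv, hwa⟩
      · exact hD a (.head' hab hba)
      · exact hwv ((hwa.tail hab).trans hbv)
    · exact hwv ((mem_an_addEdge.1 hba).elim id (·.1))

theorem uncondEquiv_addEdge_iff [Finite V] (hD : IsDAG D) {v w : V} (hwv : w ∉ an D v) :
    UncondEquiv D (addEdge D v w) ↔ maSet D {v} ⊆ maSet D {w} := by
  have hD' := (isDAG_addEdge_iff hD).2 hwv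
  simp only [UncondEquiv, hD.hasTrek_iff, hD'.hasTrek_iff]
  constructor
  · intro hequiv s hs
    rw [mem_maSet_singleton] at hs ⊢
    obtain ⟨hsv, hsrc⟩ := hs
    have hsw : s ≠ w := by rintro rfl; exact hwv hsv
    obtain ⟨u, hus, huw⟩ :=
      (hequiv s w hsw).2 ⟨s, .refl, mem_an_addEdge.2 (.inr ⟨hsv, .refl⟩)⟩
    rw [hsrc, Set.mem_singleton_iff] at hus
    exact ⟨hus ▸ huw, hsrc⟩
  · intro hsub x y _
    constructor
    · rintro ⟨u, hux, huy⟩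
      exact ⟨u, mem_an_addEdge.2 (.inl hux), mem_an_addEdge.2 (.inl huy)⟩
    · rintro ⟨u, hux, huy⟩
      obtain ⟨s, hsu, hsrc⟩ := hD.exists_mem_an_an_eq_singleton u
      have hs : ∀ a, u ∈ an (addEdge D v w) a → s ∈ an D a := fun a hua => by
        rcases mem_an_addEdge.1 hua with hua | ⟨huv, hwa⟩
        · exact hsu.trans hua
        · have hsw := hsub (mem_maSet_singleton.2 ⟨hsu.trans huv, hsrc⟩)
          exact (mem_maSet_singleton.1 hsw).1.trans hwa
      exact ⟨s, hs x hux, hs y huy⟩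

theorem addEdge_uncondEquiv_iff_general [Fintype V] (D : Digraph V) (hD : IsDAG D)
    (v w : V) (hnadj : ¬ Adjacent D v w) :
    (IsDAG (addEdge D v w) ∧ UncondEquiv D (addEdge D v w)) ↔
      (PartiallyWeaklyCovered D v w ∨ ImpliedByTransitivity D v w) := by
  rw [isDAG_addEdge_iff hD]
  constructor
  · rintro ⟨hwv, hequiv⟩
    rw [uncondEquiv_addEdge_iff hD hwv] at hequiv
    by_cases hvw : v ∈ an D w
    · refine .inr ⟨hvw, ?_⟩
      rintro (rfl | hpa)
      · exact hwv .refl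
      · exact hnadj (.inl hpa)
    · refine .inl ⟨hequiv, hvw, hwv, fun hpa => hvw ?_⟩
      have hv : v ∈ maSet D {v} :=
        mem_maSet_singleton.2 ⟨.refl, an_eq_singleton_of_pa_eq_empty hpa⟩
      exact (mem_maSet_singleton.1 (hequiv hv)).1
  · rintro (⟨hsub, -, hwv, -⟩ | ⟨hvw, hne⟩)
    · exact ⟨hwv, (uncondEquiv_addEdge_iff hD hwv).2 hsub⟩
    · have hwv : w ∉ an D v := fun hwv => hne (.inl (hD.eq_of_mem_an_of_mem_an hvw hwv))
      exact ⟨hwv, (uncondEquiv_addEdge_iff hD hwv).2 (maSet_singleton_subset_of_mem_an hvw)⟩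

/-- Let `v, w` be distinct nonadjacent nodes of a DAG `D` and
let `D'` be `D` with the edge `v → w` added.  Then `D'` is a DAG
unconditionally equivalent to `D` iff `(v, w)` is partially weakly covered or
implied by transitivity in `D`. -/
theorem addEdge_uncondEquiv_iff [Fintype V] (D : Digraph V) (hD : IsDAG D)
    (v w : V) (hvw : v ≠ w) (hnadj : ¬ Adjacent D v w) :
    (IsDAG (addEdge D v w) ∧ UncondEquiv D (addEdge D v w)) ↔
      (PartiallyWeaklyCovered D v w ∨ ImpliedByTransitivity D v w) :=
  addEdge_uncondEquiv_iff_general D hD v w hnadj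

end UEC
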